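/- For each n ≥ 1 and every real t at which all functions involved are defined (t not a pole of R_{n−1}, R_n, R_{n+1}, s_n, or of s_n shifted by 1), there holds the identity (2n+1)^2(2n+2)^2 p(n) R_{n+1}(t) − q(n) R_n(t) − (2n−1)^2(2n)^2 p(n+1) R_{n−1}(t) = −S_n(t+1) − S_n(t), where S_n(t) = s_n(t) R_n(t). -/

import Mathlib

open Filter Topology

noncomputable section

/-- The rational function
`R_n(t) = n!(2t+n+1)·[t(t-1)⋯(t-n+1)·(t+n+1)⋯(t+2n)] / ((t+1/2)(t+3/2)⋯(t+n+1/2))³`. -/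
def R (n : ℕ) (t : ℝ) : ℝ :=
  (Nat.factorial n : ℝ) * (2*t + n + 1) *
    ((∏ i ∈ Finset.range n, (t - i)) * ∏ i ∈ Finset.range n, (t + n + 1 + i)) /
    (∏ k ∈ Finset.range (n+1), (t + k + 1/2))^3

/-- `A_{jk}(n) = (1/j!)·(d/dt)^j (R_n(t)(t+k+1/2)³) |_{t = -k-1/2}`. -/
def A (n j k : ℕ) : ℝ :=
  (1 / (Nat.factorial j : ℝ)) *
    iteratedDeriv j (fun t : ℝ => R n t * (t + k + 1/2)^3) (-(k : ℝ) - 1/2)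

/-- `F_n = Σ_{t≥0} (-1)^t R_n(t)`. -/
def F (n : ℕ) : ℝ := ∑' t : ℕ, (-1)^t * R n t

/-- `U_n = 2³ Σ_{k=0}^n (-1)^k A_{0k}(n)`. -/
def U (n : ℕ) : ℝ := 2^3 * ∑ k ∈ Finset.range (n+1), (-1)^k * A n 0 k

/-- `U_n' = 2² Σ_{k=0}^n (-1)^k A_{1k}(n)`. -/
def U' (n : ℕ) : ℝ := 2^2 * ∑ k ∈ Finset.range (n+1), (-1)^k * A n 1 k

/-- `U_n'' = 2 Σ_{k=0}^n (-1)^k A_{2k}(n)`. -/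
def U'' (n : ℕ) : ℝ := 2 * ∑ k ∈ Finset.range (n+1), (-1)^k * A n 2 k

/-- `V_n = Σ_{j=0}^2 2^{3-j} Σ_{k=0}^n (-1)^k A_{jk}(n) Σ_{l=0}^{k-1} (-1)^l/(2l+1)^{3-j}`. -/
def V (n : ℕ) : ℝ :=
  ∑ j ∈ Finset.range 3, 2^(3-j) *
    ∑ k ∈ Finset.range (n+1), (-1)^k * A n j k *
      ∑ l ∈ Finset.range k, (-1)^l / (2*(l : ℝ)+1)^(3-j)

/-- Dirichlet's beta function `β(s) = Σ_{l≥0} (-1)^l/(2l+1)^s`, defined as the limit of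
the partial sums (the series converges only conditionally for `s = 1`). -/
def beta (s : ℕ) : ℝ :=
  limUnder atTop (fun N : ℕ => ∑ l ∈ Finset.range N, (-1)^l / (2*(l : ℝ)+1)^s)

/-- `D n = lcm(1, 2, …, n)` (equal to `1` for `n = 0`). -/
def D (n : ℕ) : ℕ := (Finset.Icc 1 n).lcm id

/-- Catalan's constant `G = β(2) = Σ_{l≥0} (-1)^l / (2l+1)²`. -/
def G : ℝ := ∑' l : ℕ, (-1)^l / (2*(l : ℝ)+1)^2

/-- `p(x) = 20x² - 8x + 1` (as a real function). -/
def pR (x : ℝ) : ℝ := 20*x^2 - 8*x + 1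

/-- `q(x) = 3520x⁶ + 5632x⁵ + 2064x⁴ - 384x³ - 156x² + 16x + 7` (as a real function). -/
def qR (x : ℝ) : ℝ := 3520*x^6 + 5632*x^5 + 2064*x^4 - 384*x^3 - 156*x^2 + 16*x + 7

/-- The certificate rational function `s_n(t)` produced by Zeilberger's algorithm. -/
def sFun (n : ℕ) (t : ℝ) : ℝ :=
  (8*(n : ℝ)*(2*(n : ℝ)-1)^2*(20*(n : ℝ)^2+32*(n : ℝ)+13)*t^4
    + 2*(5440*(n : ℝ)^6+7104*(n : ℝ)^5+912*(n : ℝ)^4-1088*(n : ℝ)^3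
        +76*(n : ℝ)^2+68*(n : ℝ)+7)*t^3
    + (44800*(n : ℝ)^7+65600*(n : ℝ)^6+17568*(n : ℝ)^5-7056*(n : ℝ)^4
        -1088*(n : ℝ)^3+372*(n : ℝ)^2+146*(n : ℝ)-1)*t^2
    + (2*(n : ℝ)+1)*(34880*(n : ℝ)^7+39328*(n : ℝ)^6-2176*(n : ℝ)^5-8416*(n : ℝ)^4
        +964*(n : ℝ)^3+154*(n : ℝ)^2+58*(n : ℝ)-13)*t
    + (n : ℝ)*(2*(n : ℝ)-1)*(2*(n : ℝ)+1)^2*(4720*(n : ℝ)^5+6192*(n : ℝ)^4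
        +816*(n : ℝ)^3-864*(n : ℝ)^2+69*(n : ℝ)+13))
  / (2*(2*t+(n : ℝ)+1)*(t+2*(n : ℝ)-1)*(t+2*(n : ℝ)))

/-- `S_n(t) = s_n(t)·R_n(t)`. -/
def S (n : ℕ) (t : ℝ) : ℝ := sFun n t * R n t

/-! Each of `R_{n+1}(t)`, `R_n(t)`, `R_n(t+1)` and `R_{n-1}(t)` is the product
`(n-1)! · t(t-1)⋯(t-n+2) · (t+n+2)⋯(t+2n) / ((t+1/2)⋯(t+n+1/2))³` times an explicit rational
function of `n` and `t`. Factoring out this product, rather than dividing by `R_n(t)` (which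
vanishes at `t = 0, …, n-1`), reduces the identity to one between rational functions of `n` and
`t`: the verification of Zeilberger's certificate `s_n`. -/

open Finset Polynomial

lemma ascPochhammer_eval_eq_prod_range {K : Type*} [CommSemiring K] (n : ℕ) (x : K) :
    (ascPochhammer K n).eval x = ∏ i ∈ range n, (x + i) := by
  induction n with
  | zero => simp
  | succ n ih => rw [ascPochhammer_succ_eval, ih, prod_range_succ]

lemma ascPochhammer_eval_add_one_mul {K : Type*} [CommSemiring K] (n : ℕ) (x : K) :
    (ascPochhammer K n).eval (x + 1) * x = (ascPochhammer K n).eval x * (x + n) := by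
  rw [← ascPochhammer_succ_eval, ascPochhammer_succ_left, eval_mul, eval_comp, mul_comm]
  simp

lemma descPochhammer_succ_eval_add_one {K : Type*} [CommRing K] (n : ℕ) (x : K) :
    (descPochhammer K (n + 1)).eval (x + 1) = (x + 1) * (descPochhammer K n).eval x := by
  simp [descPochhammer_succ_left, eval_comp]

lemma R_eq_pochhammer (n : ℕ) (t : ℝ) :
    R n t = n.factorial * (2 * t + n + 1) *
      ((descPochhammer ℝ n).eval t * (ascPochhammer ℝ n).eval (t + n + 1)) /
        (ascPochhammer ℝ (n + 1)).eval (t + 1/2) ^ 3 := by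
  simp only [R, descPochhammer_eval_eq_prod_range, ascPochhammer_eval_eq_prod_range]
  congr 3
  funext k
  ring

def commonFactor (n : ℕ) (t : ℝ) : ℝ :=
  (n - 1).factorial *
    ((descPochhammer ℝ (n - 1)).eval t * (ascPochhammer ℝ (n - 1)).eval (t + n + 2)) /
      (ascPochhammer ℝ (n + 1)).eval (t + 1/2) ^ 3

section Cofactors

variable {n : ℕ} (hn : 1 ≤ n) (t : ℝ)
include hn

lemma R_succ_eq_commonFactor_mul :
    R (n + 1) t = commonFactor n t * (n * (n + 1) * (2 * t + n + 2) * (t - n + 1) * (t - n)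
      * (t + 2 * n + 1) * (t + 2 * n + 2) / (t + n + 3/2) ^ 3) := by
  obtain ⟨m, rfl⟩ := Nat.exists_eq_add_of_le' hn
  rw [R_eq_pochhammer, commonFactor, ascPochhammer_succ_eval (m + 1 + 1) (t + 1/2),
    show t + ((m + 1 + 1 : ℕ) : ℝ) + 1 = t + ((m + 1 : ℕ) : ℝ) + 2 by push_cast; ring,
    ascPochhammer_succ_eval (m + 1), ascPochhammer_succ_eval m,
    descPochhammer_succ_eval (m + 1), descPochhammer_succ_eval m,
    Nat.add_sub_cancel, div_mul_div_comm, ← mul_pow]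
  push_cast [Nat.factorial_succ]
  congr 1 <;> ring

lemma R_eq_commonFactor_mul :
    R n t = commonFactor n t * (n * (2 * t + n + 1) * (t - n + 1) * (t + n + 1)) := by
  obtain ⟨m, rfl⟩ := Nat.exists_eq_add_of_le' hn
  rw [R_eq_pochhammer, commonFactor, descPochhammer_succ_eval, ascPochhammer_succ_left,
    Nat.add_sub_cancel, div_mul_eq_mul_div]
  simp only [eval_mul, eval_X, eval_comp, eval_add, eval_one]
  push_cast [Nat.factorial_succ]
  rw [show t + (m + 1) + 1 + 1 = t + (m + 1) + 2 by ring]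
  ring

lemma R_add_one_eq_commonFactor_mul (hpoles : (ascPochhammer ℝ (n + 2)).eval (t + 1/2) ≠ 0) :
    R n (t + 1) = commonFactor n t * (n * (2 * t + n + 3) * (t + 1) * (t + 2 * n + 1)
      * (t + 1/2) ^ 3 / (t + n + 3/2) ^ 3) := by
  rw [ascPochhammer_succ_eval, mul_ne_zero_iff] at hpoles
  obtain ⟨hd, hc⟩ := hpoles
  have h0 : t + 1/2 ≠ 0 := by
    rw [ascPochhammer_succ_left, eval_mul, eval_X] at hd
    exact left_ne_zero_of_mul hd
  have hshift := ascPochhammer_eval_add_one_mul (n + 1) (t + 1/2)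
  rw [show t + 1/2 + 1 = t + 1 + 1/2 by ring, ← eq_div_iff h0] at hshift
  obtain ⟨m, rfl⟩ := Nat.exists_eq_add_of_le' hn
  rw [R_eq_pochhammer, commonFactor, descPochhammer_succ_eval_add_one, hshift,
    show t + 1 + ((m + 1 : ℕ) : ℝ) + 1 = t + ((m + 1 : ℕ) : ℝ) + 2 by ring,
    ascPochhammer_succ_eval m, Nat.add_sub_cancel]
  push_cast [Nat.factorial_succ] at hc ⊢
  field_simp
  ring

lemma R_pred_eq_commonFactor_mul (hpoles : (ascPochhammer ℝ (n + 1)).eval (t + 1/2) ≠ 0)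
    (h₁ : t + 2 * n - 1 ≠ 0) (h₂ : t + 2 * n ≠ 0) :
    R (n - 1) t = commonFactor n t * ((2 * t + n) * (t + n) * (t + n + 1) * (t + n + 1/2) ^ 3
      / ((t + 2 * n - 1) * (t + 2 * n))) := by
  obtain ⟨m, rfl⟩ := Nat.exists_eq_add_of_le' hn
  rw [ascPochhammer_succ_eval, mul_ne_zero_iff] at hpoles
  obtain ⟨hd, hc⟩ := hpoles
  push_cast at h₁ h₂ hc
  have e₁ := ascPochhammer_eval_add_one_mul m (t + m + 1)
  have e₂ := ascPochhammer_eval_add_one_mul m (t + m + 2)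
  rw [show t + m + 1 + 1 = t + m + 2 by ring] at e₁
  rw [show t + m + 2 + 1 = t + ((m : ℝ) + 1) + 2 by ring] at e₂
  have hshift : (ascPochhammer ℝ m).eval (t + m + 1)
      = (ascPochhammer ℝ m).eval (t + ((m : ℝ) + 1) + 2) * (t + m + 1) * (t + m + 2)
        / ((t + 2 * (m + 1) - 1) * (t + 2 * (m + 1))) := by
    rw [eq_div_iff (mul_ne_zero h₁ h₂)]
    linear_combination -(t + 2 * m + 2) * e₁ - (t + m + 1) * e₂
  rw [R_eq_pochhammer, commonFactor, ascPochhammer_succ_eval (m + 1), Nat.add_sub_cancel]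
  push_cast
  rw [hshift, show t + ((m : ℝ) + 1) + 1/2 = t + 1/2 + (m + 1) by ring]
  -- atoms, so that `field_simp` does not rewrite `t + 1/2` as `(2 * t + 1) / 2` inside them
  generalize (ascPochhammer ℝ (m + 1)).eval (t + 1/2) = d at hd ⊢
  generalize t + 1/2 + (m + 1) = c at hc ⊢
  field_simp
  ring

end Cofactors

lemma creative_telescoping_cofactor_identity (n : ℕ) (t : ℝ) (hA : 2 * t + n + 1 ≠ 0)
    (hB : t + 2 * n - 1 ≠ 0) (hC : t + 2 * n ≠ 0) (hD : 2 * (t + 1) + n + 1 ≠ 0)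
    (hF : (t + 1) + 2 * n ≠ 0) (hc : t + n + 3/2 ≠ 0) :
    (2 * n + 1) ^ 2 * (2 * n + 2) ^ 2 * pR n * (n * (n + 1) * (2 * t + n + 2) * (t - n + 1)
        * (t - n) * (t + 2 * n + 1) * (t + 2 * n + 2) / (t + n + 3/2) ^ 3)
      - qR n * (n * (2 * t + n + 1) * (t - n + 1) * (t + n + 1))
      - (2 * n - 1) ^ 2 * (2 * n) ^ 2 * pR (n + 1) * ((2 * t + n) * (t + n) * (t + n + 1)
        * (t + n + 1/2) ^ 3 / ((t + 2 * n - 1) * (t + 2 * n)))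
    = -(sFun n (t + 1) * (n * (2 * t + n + 3) * (t + 1) * (t + 2 * n + 1)
        * (t + 1/2) ^ 3 / (t + n + 3/2) ^ 3))
      - sFun n t * (n * (2 * t + n + 1) * (t - n + 1) * (t + n + 1)) := by
  have hE : (t + 1) + 2 * n - 1 ≠ 0 := by rwa [add_sub_right_comm, add_sub_cancel_right]
  -- the form in which `field_simp` asks for `t + n + 3/2 ≠ 0`
  have hc' : 2 * (t + n) + 3 ≠ 0 := by contrapose! hc; linarith
  unfold sFun pR qR
  field_simp
  ring

/-- the creative-telescoping identity
`(2n+1)²(2n+2)² p(n) R_{n+1}(t) - q(n) R_n(t) - (2n-1)²(2n)² p(n+1) R_{n-1}(t)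
  = -S_n(t+1) - S_n(t)`
for `n ≥ 1` and `t` avoiding all poles involved. -/
theorem creative_telescoping_identity :
    ∀ n : ℕ, 1 ≤ n → ∀ t : ℝ,
      (∀ k : ℕ, k ≤ n + 1 → t ≠ -(k : ℝ) - 1/2) →
      2*t + (n : ℝ) + 1 ≠ 0 → t + 2*(n : ℝ) - 1 ≠ 0 → t + 2*(n : ℝ) ≠ 0 →
      2*(t+1) + (n : ℝ) + 1 ≠ 0 → (t+1) + 2*(n : ℝ) - 1 ≠ 0 → (t+1) + 2*(n : ℝ) ≠ 0 →
      (2*(n : ℝ)+1)^2 * (2*(n : ℝ)+2)^2 * pR (n : ℝ) * R (n+1) t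
          - qR (n : ℝ) * R n t
          - (2*(n : ℝ)-1)^2 * (2*(n : ℝ))^2 * pR ((n : ℝ)+1) * R (n-1) t
        = -S n (t+1) - S n t := by
  intro n hn t hpoles hA hB hC hD _ hF
  have hasc : (ascPochhammer ℝ (n + 2)).eval (t + 1/2) ≠ 0 := by
    rw [ne_eq, ascPochhammer_eval_eq_zero_iff]
    rintro ⟨k, hk, hkt⟩
    exact hpoles k (by omega) (by linarith)
  have hasc' : (ascPochhammer ℝ (n + 1)).eval (t + 1/2) ≠ 0 :=
    left_ne_zero_of_mul (ascPochhammer_succ_eval (n + 1) (t + 1/2) ▸ hasc)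
  have hc : t + n + 3/2 ≠ 0 := by
    have := hpoles (n + 1) le_rfl
    contrapose! this
    push_cast
    linarith
  rw [S, S, R_succ_eq_commonFactor_mul hn, R_eq_commonFactor_mul hn,
    R_add_one_eq_commonFactor_mul hn t hasc, R_pred_eq_commonFactor_mul hn t hasc' hB hC]
  linear_combination commonFactor n t *
    creative_telescoping_cofactor_identity n t hA hB hC hD hF hc
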